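/- Let K : ℝ^{1+1} → ℂ satisfy sup_{x∈ℝ} |K(t,x)| ≤ C(1+|t|)^{-1/2}, let ψ ∈ C^∞_c((−2,−1/2)∪(1/2,2)) be a nonnegative even bump function, and for l ≥ 1 let T_l be the operator on functions on ℝ^{1+1} with integral kernel K_l(t−t', x−x') = ψ(2^{-l}(t−t')) K(t−t', x−x'). Then there is a constant C, independent of l, such that for all W₁, W₂ the Hilbert–Schmidt bound ‖ W₁ T_l W₂ ‖_{C²(L²(ℝ^{1+1}))} ≤ C ‖W₁‖_{L⁴_t L²_x} ‖W₂‖_{L⁴_t L²_x} holds, where W₁, W₂ act by pointwise multiplication. -/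

import Mathlib

open MeasureTheory Complex Filter ComplexConjugate Set
open scoped ENNReal NNReal BigOperators

noncomputable section

/-- The mixed norm `‖W‖_{L⁴_t L²_x}` of `W : ℝ × ℝ → ℂ`. -/
def normL4L2 (W : ℝ × ℝ → ℂ) : ℝ≥0∞ :=
  (∫⁻ t : ℝ, ((∫⁻ x : ℝ, (‖W (t, x)‖₊ : ℝ≥0∞) ^ 2) ^ ((1:ℝ)/2)) ^ (4:ℝ)) ^ ((1:ℝ)/4)

/-- **Lemma 3.2, estimate (3.4)**: with `K` satisfying `sup_x |K(t,x)| ≤ C₀(1+|t|)^{-1/2}`,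
`ψ` a nonnegative even bump function supported in `(-2,-1/2) ∪ (1/2,2)`, and `T_l` the operator
with integral kernel `K_l(t-t', x-x') = ψ(2^{-l}(t-t')) K(t-t', x-x')`, the Hilbert–Schmidt
bound `‖W₁ T_l W₂‖_{C²} ≤ C ‖W₁‖_{L⁴_t L²_x} ‖W₂‖_{L⁴_t L²_x}` holds with `C` independent of
`l ≥ 1`.  The Hilbert–Schmidt norm is the `L²` norm of the integral kernel
`W₁(t,x) K_l(t-t', x-x') W₂(t',x')`. -/
theorem hilbert_schmidt_dyadic_piece
    (K : ℝ × ℝ → ℂ) (C₀ : ℝ) (hKmeas : Measurable K)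
    (hker : ∀ t x : ℝ, ‖K (t, x)‖ ≤ C₀ * (1 + |t|) ^ (-(1:ℝ)/2))
    (ψ : ℝ → ℝ) (hψsmooth : ContDiff ℝ (⊤ : ℕ∞) ψ) (hψsupp : HasCompactSupport ψ)
    (hψsupp' : tsupport ψ ⊆ Set.Ioo (-2 : ℝ) (-(1:ℝ)/2) ∪ Set.Ioo ((1:ℝ)/2) 2)
    (hψpos : ∀ s, 0 ≤ ψ s) (hψeven : ∀ s, ψ (-s) = ψ s) :
    ∃ C : ℝ≥0, ∀ l : ℕ, 1 ≤ l → ∀ W₁ W₂ : ℝ × ℝ → ℂ,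
      Measurable W₁ → Measurable W₂ →
      (∫⁻ t : ℝ, ∫⁻ x : ℝ, ∫⁻ t' : ℝ, ∫⁻ x' : ℝ,
          (‖W₁ (t, x)‖₊ : ℝ≥0∞) ^ 2 *
          ENNReal.ofReal (ψ ((t - t') / 2 ^ l)) ^ 2 *
          (‖K (t - t', x - x')‖₊ : ℝ≥0∞) ^ 2 *
          (‖W₂ (t', x')‖₊ : ℝ≥0∞) ^ 2) ^ ((1:ℝ)/2)
        ≤ C * normL4L2 W₁ * normL4L2 W₂ := by
  -- `C₀ ≥ 0`
  have hC₀ : 0 ≤ C₀ := by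
    have h := (norm_nonneg (K (0, 0))).trans (hker 0 0)
    have hp : (0:ℝ) < (1 + |(0:ℝ)|) ^ (-(1:ℝ)/2) := Real.rpow_pos_of_pos (by norm_num) _
    nlinarith
  -- bound on ψ
  obtain ⟨M₀, hM₀⟩ := hψsupp.exists_bound_of_continuous hψsmooth.continuous
  set M : ℝ := max M₀ 0 with hMdef
  have hM0 : 0 ≤ M := le_max_right _ _
  have hM : ∀ s, ψ s ≤ M := fun s =>
    le_trans (le_trans (le_abs_self _) (by simpa using hM₀ s)) (le_max_left _ _)
  -- support information for ψ
  have habs : ∀ s : ℝ, ψ s ≠ 0 → 1/2 < |s| ∧ |s| < 2 := by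
    intro s hs0
    have hs := hψsupp' (subset_tsupport ψ hs0)
    rcases hs with ⟨h₁, h₂⟩ | ⟨h₁, h₂⟩
    · refine ⟨?_, abs_lt.mpr ⟨h₁, by linarith⟩⟩
      calc (1:ℝ)/2 < -s := by linarith
        _ ≤ |s| := neg_le_abs s
    · exact ⟨lt_of_lt_of_le h₁ (le_abs_self s), abs_lt.mpr ⟨by linarith, h₂⟩⟩
  refine ⟨(8 * M ^ 2 * C₀ ^ 2).toNNReal ^ ((1:ℝ)/2), ?_⟩
  intro l hl W₁ W₂ hW₁ hW₂
  set R : ℝ := 2 ^ (l + 1) with hRdef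
  have hR0 : 0 < R := by positivity
  set S : Set (ℝ × ℝ) := {p | |p.1 - p.2| ≤ R} with hSdef
  have hSmeas : MeasurableSet S :=
    measurableSet_le ((measurable_fst.sub measurable_snd).abs) measurable_const
  set k : ℝ × ℝ → ℝ≥0∞ := S.indicator 1 with hkdef
  have hkmeas : Measurable k := measurable_one.indicator hSmeas
  have hk01 : ∀ p : ℝ × ℝ, k p = 0 ∨ k p = 1 := by
    intro p; by_cases hp : p ∈ S
    · right; simp [hkdef, hp]
    · left; simp [hkdef, hp]
  set A : ℝ≥0∞ := ENNReal.ofReal (M ^ 2 * (C₀ ^ 2 * (2 * ((2:ℝ) ^ l)⁻¹))) with hAdef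
  set g₁ : ℝ → ℝ≥0∞ := fun t => ∫⁻ x, (‖W₁ (t, x)‖₊ : ℝ≥0∞) ^ 2 with hg₁def
  set g₂ : ℝ → ℝ≥0∞ := fun t => ∫⁻ x, (‖W₂ (t, x)‖₊ : ℝ≥0∞) ^ 2 with hg₂def
  have hg₁ : Measurable g₁ := (hW₁.nnnorm.coe_nnreal_ennreal.pow_const 2).lintegral_prod_right'
  have hg₂ : Measurable g₂ := (hW₂.nnnorm.coe_nnreal_ennreal.pow_const 2).lintegral_prod_right'
  have h2l : (0:ℝ) < 2 ^ l := by positivity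
  have hkt : ∀ t : ℝ, Measurable fun t' : ℝ => k (t, t') := fun t =>
    hkmeas.comp measurable_prodMk_left
  have hkt' : ∀ t' : ℝ, Measurable fun t : ℝ => k (t, t') := fun t' =>
    hkmeas.comp (measurable_id.prodMk measurable_const)
  have hkg₂ : ∀ t : ℝ, Measurable fun t' : ℝ => k (t, t') * g₂ t' := fun t =>
    (hkt t).mul hg₂
  -- pointwise bound on the integrand
  have key : ∀ t x t' x' : ℝ,
      (‖W₁ (t, x)‖₊ : ℝ≥0∞) ^ 2 * ENNReal.ofReal (ψ ((t - t') / 2 ^ l)) ^ 2 *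
        (‖K (t - t', x - x')‖₊ : ℝ≥0∞) ^ 2 * (‖W₂ (t', x')‖₊ : ℝ≥0∞) ^ 2
      ≤ A * k (t, t') * ((‖W₁ (t, x)‖₊ : ℝ≥0∞) ^ 2 * (‖W₂ (t', x')‖₊ : ℝ≥0∞) ^ 2) := by
    intro t x t' x'
    by_cases h0 : ψ ((t - t') / 2 ^ l) = 0
    · simp [h0]
    · obtain ⟨hlo, hhi⟩ := habs _ h0
      have habs' : |t - t'| = |(t - t') / 2 ^ l| * 2 ^ l := by
        rw [abs_div, abs_of_pos h2l]; field_simp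
      have hτlo : (2:ℝ) ^ l / 2 < |t - t'| := by rw [habs']; nlinarith
      have hτhi : |t - t'| ≤ R := by
        rw [habs', hRdef]
        have h2 : (2:ℝ) ^ (l + 1) = 2 ^ l * 2 := by ring
        nlinarith
      have hk1 : k (t, t') = 1 := by
        have hmem : (t, t') ∈ S := hτhi
        simp [hkdef, hmem]
      have hp : ENNReal.ofReal (ψ ((t - t') / 2 ^ l)) ^ 2 ≤ ENNReal.ofReal (M ^ 2) := by
        rw [← ENNReal.ofReal_pow (hψpos _)]
        exact ENNReal.ofReal_le_ofReal
          (by nlinarith [hψpos ((t - t') / 2 ^ l), hM ((t - t') / 2 ^ l)])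
      have hq : (‖K (t - t', x - x')‖₊ : ℝ≥0∞) ^ 2
          ≤ ENNReal.ofReal (C₀ ^ 2 * (2 * ((2:ℝ) ^ l)⁻¹)) := by
        have h1 : (‖K (t - t', x - x')‖₊ : ℝ≥0∞) ^ 2
            = ENNReal.ofReal (‖K (t - t', x - x')‖ ^ 2) := by
          rw [ENNReal.ofReal_pow (norm_nonneg _)]; exact congrArg (· ^ 2) (ofReal_norm _).symm
        rw [h1]
        apply ENNReal.ofReal_le_ofReal
        have hKb := hker (t - t') (x - x')
        have hbase : (0:ℝ) < 1 + |t - t'| := by positivity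
        have hrw : ((1 + |t - t'|) ^ (-(1:ℝ)/2)) ^ 2 = (1 + |t - t'|)⁻¹ := by
          rw [← Real.rpow_natCast ((1 + |t - t'|) ^ (-(1:ℝ)/2)) 2,
            ← Real.rpow_mul hbase.le]
          norm_num
          exact Real.rpow_neg_one _
        have hu0 : (0:ℝ) ≤ (1 + |t - t'|) ^ (-(1:ℝ)/2) := Real.rpow_nonneg hbase.le _
        have hKsq : ‖K (t - t', x - x')‖ ^ 2 ≤ C₀ ^ 2 * (1 + |t - t'|)⁻¹ := by
          have h2 : ‖K (t - t', x - x')‖ ^ 2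
              ≤ (C₀ * (1 + |t - t'|) ^ (-(1:ℝ)/2)) ^ 2 := by
            nlinarith [norm_nonneg (K (t - t', x - x'))]
          calc ‖K (t - t', x - x')‖ ^ 2 ≤ (C₀ * (1 + |t - t'|) ^ (-(1:ℝ)/2)) ^ 2 := h2
            _ = C₀ ^ 2 * ((1 + |t - t'|) ^ (-(1:ℝ)/2)) ^ 2 := by ring
            _ = C₀ ^ 2 * (1 + |t - t'|)⁻¹ := by rw [hrw]
        have hinv : (1 + |t - t'|)⁻¹ ≤ 2 * ((2:ℝ) ^ l)⁻¹ := by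
          have h3 : ((2:ℝ) ^ l / 2)⁻¹ = 2 * ((2:ℝ) ^ l)⁻¹ := by field_simp
          rw [← h3]
          exact inv_anti₀ (by positivity) (by linarith)
        calc ‖K (t - t', x - x')‖ ^ 2 ≤ C₀ ^ 2 * (1 + |t - t'|)⁻¹ := hKsq
          _ ≤ C₀ ^ 2 * (2 * ((2:ℝ) ^ l)⁻¹) :=
            mul_le_mul_of_nonneg_left hinv (by positivity)
      calc (‖W₁ (t, x)‖₊ : ℝ≥0∞) ^ 2 * ENNReal.ofReal (ψ ((t - t') / 2 ^ l)) ^ 2 *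
            (‖K (t - t', x - x')‖₊ : ℝ≥0∞) ^ 2 * (‖W₂ (t', x')‖₊ : ℝ≥0∞) ^ 2
          ≤ (‖W₁ (t, x)‖₊ : ℝ≥0∞) ^ 2 * ENNReal.ofReal (M ^ 2) *
            ENNReal.ofReal (C₀ ^ 2 * (2 * ((2:ℝ) ^ l)⁻¹)) * (‖W₂ (t', x')‖₊ : ℝ≥0∞) ^ 2 :=
            mul_le_mul' (mul_le_mul' (mul_le_mul' le_rfl hp) hq) le_rfl
        _ = A * 1 * ((‖W₁ (t, x)‖₊ : ℝ≥0∞) ^ 2 * (‖W₂ (t', x')‖₊ : ℝ≥0∞) ^ 2) := by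
            have hA' : A = ENNReal.ofReal (M ^ 2) *
                ENNReal.ofReal (C₀ ^ 2 * (2 * ((2:ℝ) ^ l)⁻¹)) := by
              rw [hAdef, ENNReal.ofReal_mul (sq_nonneg M)]
            rw [hA']; ring
        _ = A * k (t, t') * ((‖W₁ (t, x)‖₊ : ℝ≥0∞) ^ 2 * (‖W₂ (t', x')‖₊ : ℝ≥0∞) ^ 2) := by
            rw [hk1]
  -- Step 1: bound the quadruple integral
  have step1 : (∫⁻ t : ℝ, ∫⁻ x : ℝ, ∫⁻ t' : ℝ, ∫⁻ x' : ℝ,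
        (‖W₁ (t, x)‖₊ : ℝ≥0∞) ^ 2 *
        ENNReal.ofReal (ψ ((t - t') / 2 ^ l)) ^ 2 *
        (‖K (t - t', x - x')‖₊ : ℝ≥0∞) ^ 2 *
        (‖W₂ (t', x')‖₊ : ℝ≥0∞) ^ 2)
      ≤ ∫⁻ t : ℝ, ∫⁻ x : ℝ, ∫⁻ t' : ℝ, ∫⁻ x' : ℝ,
        A * k (t, t') * ((‖W₁ (t, x)‖₊ : ℝ≥0∞) ^ 2 * (‖W₂ (t', x')‖₊ : ℝ≥0∞) ^ 2) :=
    lintegral_mono fun t => lintegral_mono fun x => lintegral_mono fun t' =>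
      lintegral_mono fun x' => key t x t' x'
  -- Step 2: compute the right-hand side
  have step2 : (∫⁻ t : ℝ, ∫⁻ x : ℝ, ∫⁻ t' : ℝ, ∫⁻ x' : ℝ,
        A * k (t, t') * ((‖W₁ (t, x)‖₊ : ℝ≥0∞) ^ 2 * (‖W₂ (t', x')‖₊ : ℝ≥0∞) ^ 2))
      = A * ∫⁻ t : ℝ, g₁ t * ∫⁻ t' : ℝ, k (t, t') * g₂ t' := by
    have hb : ∀ t' : ℝ, Measurable fun x' : ℝ => (‖W₂ (t', x')‖₊ : ℝ≥0∞) ^ 2 := fun t' =>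
      (hW₂.nnnorm.coe_nnreal_ennreal.pow_const 2).comp measurable_prodMk_left
    have ha : ∀ t : ℝ, Measurable fun x : ℝ => (‖W₁ (t, x)‖₊ : ℝ≥0∞) ^ 2 := fun t =>
      (hW₁.nnnorm.coe_nnreal_ennreal.pow_const 2).comp measurable_prodMk_left
    have hh : Measurable fun t : ℝ => ∫⁻ t' : ℝ, k (t, t') * g₂ t' :=
      (hkmeas.mul (hg₂.comp measurable_snd)).lintegral_prod_right'
    calc (∫⁻ t : ℝ, ∫⁻ x : ℝ, ∫⁻ t' : ℝ, ∫⁻ x' : ℝ,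
          A * k (t, t') * ((‖W₁ (t, x)‖₊ : ℝ≥0∞) ^ 2 * (‖W₂ (t', x')‖₊ : ℝ≥0∞) ^ 2))
        = ∫⁻ t : ℝ, ∫⁻ x : ℝ, ∫⁻ t' : ℝ,
            A * (‖W₁ (t, x)‖₊ : ℝ≥0∞) ^ 2 * (k (t, t') * g₂ t') := by
          refine lintegral_congr fun t => lintegral_congr fun x => lintegral_congr fun t' => ?_
          have : (fun x' : ℝ => A * k (t, t') *
              ((‖W₁ (t, x)‖₊ : ℝ≥0∞) ^ 2 * (‖W₂ (t', x')‖₊ : ℝ≥0∞) ^ 2))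
              = fun x' : ℝ => (A * k (t, t') * (‖W₁ (t, x)‖₊ : ℝ≥0∞) ^ 2) *
                (‖W₂ (t', x')‖₊ : ℝ≥0∞) ^ 2 := by funext x'; ring
          rw [this, lintegral_const_mul _ (hb t'), hg₂def]; ring
      _ = ∫⁻ t : ℝ, ∫⁻ x : ℝ,
            A * (‖W₁ (t, x)‖₊ : ℝ≥0∞) ^ 2 * ∫⁻ t' : ℝ, k (t, t') * g₂ t' := by
          refine lintegral_congr fun t => lintegral_congr fun x => ?_
          rw [lintegral_const_mul _ (hkg₂ t)]
      _ = ∫⁻ t : ℝ, A * (∫⁻ t' : ℝ, k (t, t') * g₂ t') * g₁ t := by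
          refine lintegral_congr fun t => ?_
          have : (fun x : ℝ => A * (‖W₁ (t, x)‖₊ : ℝ≥0∞) ^ 2 *
              ∫⁻ t' : ℝ, k (t, t') * g₂ t')
              = fun x : ℝ => (A * ∫⁻ t' : ℝ, k (t, t') * g₂ t') *
                (‖W₁ (t, x)‖₊ : ℝ≥0∞) ^ 2 := by funext x; ring
          rw [this, lintegral_const_mul _ (ha t), hg₁def]
      _ = A * ∫⁻ t : ℝ, g₁ t * ∫⁻ t' : ℝ, k (t, t') * g₂ t' := by
          have : (fun t : ℝ => A * (∫⁻ t' : ℝ, k (t, t') * g₂ t') * g₁ t)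
              = fun t : ℝ => A * (g₁ t * ∫⁻ t' : ℝ, k (t, t') * g₂ t') := by
            funext t; ring
          rw [this, lintegral_const_mul (f := fun t => g₁ t * ∫⁻ t' : ℝ, k (t, t') * g₂ t') _ (hg₁.mul hh)]
  -- Step 3: the double t-integral as a product integral
  set F : ℝ × ℝ → ℝ≥0∞ := fun p => k p * g₁ p.1 * g₂ p.2 with hFdef
  have hFmeas : Measurable F := (hkmeas.mul (hg₁.comp measurable_fst)).mul (hg₂.comp measurable_snd)
  have step3 : (∫⁻ t : ℝ, g₁ t * ∫⁻ t' : ℝ, k (t, t') * g₂ t')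
      = ∫⁻ p : ℝ × ℝ, F p ∂(volume.prod volume) := by
    rw [lintegral_prod F hFmeas.aemeasurable]
    refine lintegral_congr fun t => ?_
    rw [← lintegral_const_mul _ (hkg₂ t)]
    refine lintegral_congr fun t' => ?_
    simp only [hFdef]; ring
  -- Step 4: Cauchy-Schwarz
  set u : ℝ × ℝ → ℝ≥0∞ := fun p => k p * g₁ p.1 with hudef
  set v : ℝ × ℝ → ℝ≥0∞ := fun p => k p * g₂ p.2 with hvdef
  have humeas : Measurable u := hkmeas.mul (hg₁.comp measurable_fst)
  have hvmeas : Measurable v := hkmeas.mul (hg₂.comp measurable_snd)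
  have hFuv : ∀ p : ℝ × ℝ, F p = u p * v p := by
    intro p
    simp only [hFdef, hudef, hvdef]
    rcases hk01 p with h | h <;> simp [h] <;> ring
  have hconj : ((2:ℝ)).HolderConjugate 2 := Real.HolderConjugate.two_two
  have step4 : (∫⁻ p : ℝ × ℝ, F p ∂(volume.prod volume))
      ≤ (∫⁻ p : ℝ × ℝ, u p ^ (2:ℝ) ∂(volume.prod volume)) ^ ((1:ℝ)/2) *
        (∫⁻ p : ℝ × ℝ, v p ^ (2:ℝ) ∂(volume.prod volume)) ^ ((1:ℝ)/2) := by
    have h := ENNReal.lintegral_mul_le_Lp_mul_Lq (volume.prod volume) hconj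
      humeas.aemeasurable hvmeas.aemeasurable
    simp only [Pi.mul_apply] at h
    calc (∫⁻ p : ℝ × ℝ, F p ∂(volume.prod volume))
        = ∫⁻ p : ℝ × ℝ, u p * v p ∂(volume.prod volume) := lintegral_congr hFuv
      _ ≤ _ := by simpa [one_div] using h
  -- Step 5: compute the squares
  have hksq : ∀ p : ℝ × ℝ, k p ^ (2:ℝ) = k p := by
    intro p; rcases hk01 p with h | h <;> simp [h]
  have hslice : ∀ t : ℝ, (∫⁻ t' : ℝ, k (t, t')) = ENNReal.ofReal (2 * R) := by
    intro t
    have hset : (fun t' : ℝ => k (t, t')) = (Set.Icc (t - R) (t + R)).indicator 1 := by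
      funext t'
      by_cases h : |t - t'| ≤ R
      · have h1 : (t, t') ∈ S := h
        have h2 : t' ∈ Set.Icc (t - R) (t + R) := by
          rw [abs_le] at h; constructor <;> [linarith [h.2]; linarith [h.1]]
        simp [hkdef, h1, h2]
      · have h1 : (t, t') ∉ S := h
        have h2 : t' ∉ Set.Icc (t - R) (t + R) := by
          intro hc; exact h (abs_le.mpr ⟨by linarith [hc.2], by linarith [hc.1]⟩)
        simp [hkdef, h1, h2]
    rw [hset, lintegral_indicator_one measurableSet_Icc, Real.volume_Icc]
    congr 1; ring
  have hslice' : ∀ t' : ℝ, (∫⁻ t : ℝ, k (t, t')) = ENNReal.ofReal (2 * R) := by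
    intro t'
    have hset : (fun t : ℝ => k (t, t')) = (Set.Icc (t' - R) (t' + R)).indicator 1 := by
      funext t
      by_cases h : |t - t'| ≤ R
      · have h1 : (t, t') ∈ S := h
        have h2 : t ∈ Set.Icc (t' - R) (t' + R) := by
          rw [abs_le] at h; constructor <;> [linarith [h.1]; linarith [h.2]]
        simp [hkdef, h1, h2]
      · have h1 : (t, t') ∉ S := h
        have h2 : t ∉ Set.Icc (t' - R) (t' + R) := by
          intro hc; exact h (abs_le.mpr ⟨by linarith [hc.1], by linarith [hc.2]⟩)
        simp [hkdef, h1, h2]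
    rw [hset, lintegral_indicator_one measurableSet_Icc, Real.volume_Icc]
    congr 1; ring
  have husq : (∫⁻ p : ℝ × ℝ, u p ^ (2:ℝ) ∂(volume.prod volume))
      = ENNReal.ofReal (2 * R) * ∫⁻ t : ℝ, g₁ t ^ (2:ℝ) := by
    have h1 : ∀ p : ℝ × ℝ, u p ^ (2:ℝ) = k p * g₁ p.1 ^ (2:ℝ) := by
      intro p
      simp only [hudef]
      rw [ENNReal.mul_rpow_of_nonneg _ _ (by norm_num : (0:ℝ) ≤ 2), hksq p]
    calc (∫⁻ p : ℝ × ℝ, u p ^ (2:ℝ) ∂(volume.prod volume))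
        = ∫⁻ p : ℝ × ℝ, k p * g₁ p.1 ^ (2:ℝ) ∂(volume.prod volume) := lintegral_congr h1
      _ = ∫⁻ t : ℝ, ∫⁻ t' : ℝ, k (t, t') * g₁ t ^ (2:ℝ) :=
          lintegral_prod (fun p : ℝ × ℝ => k p * g₁ p.1 ^ (2:ℝ))
            ((hkmeas.mul ((hg₁.comp measurable_fst).pow_const _)).aemeasurable)
      _ = ∫⁻ t : ℝ, g₁ t ^ (2:ℝ) * ENNReal.ofReal (2 * R) := by
          refine lintegral_congr fun t => ?_
          rw [← hslice t, ← lintegral_const_mul _ (hkt t)]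
          refine lintegral_congr fun t' => ?_; ring
      _ = ENNReal.ofReal (2 * R) * ∫⁻ t : ℝ, g₁ t ^ (2:ℝ) := by
          rw [lintegral_mul_const _ (hg₁.pow_const _), mul_comm]
  have hvsq : (∫⁻ p : ℝ × ℝ, v p ^ (2:ℝ) ∂(volume.prod volume))
      = ENNReal.ofReal (2 * R) * ∫⁻ t : ℝ, g₂ t ^ (2:ℝ) := by
    have h1 : ∀ p : ℝ × ℝ, v p ^ (2:ℝ) = k p * g₂ p.2 ^ (2:ℝ) := by
      intro p
      simp only [hvdef]
      rw [ENNReal.mul_rpow_of_nonneg _ _ (by norm_num : (0:ℝ) ≤ 2), hksq p]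
    calc (∫⁻ p : ℝ × ℝ, v p ^ (2:ℝ) ∂(volume.prod volume))
        = ∫⁻ p : ℝ × ℝ, k p * g₂ p.2 ^ (2:ℝ) ∂(volume.prod volume) := lintegral_congr h1
      _ = ∫⁻ t' : ℝ, ∫⁻ t : ℝ, k (t, t') * g₂ t' ^ (2:ℝ) :=
          lintegral_prod_symm (fun p : ℝ × ℝ => k p * g₂ p.2 ^ (2:ℝ))
            ((hkmeas.mul ((hg₂.comp measurable_snd).pow_const _)).aemeasurable)
      _ = ∫⁻ t' : ℝ, g₂ t' ^ (2:ℝ) * ENNReal.ofReal (2 * R) := by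
          refine lintegral_congr fun t' => ?_
          rw [← hslice' t', ← lintegral_const_mul _ (hkt' t')]
          refine lintegral_congr fun t => ?_; ring
      _ = ENNReal.ofReal (2 * R) * ∫⁻ t : ℝ, g₂ t ^ (2:ℝ) := by
          rw [lintegral_mul_const _ (hg₂.pow_const _), mul_comm]
  -- norms
  have hnorm₁ : normL4L2 W₁ = (∫⁻ t : ℝ, g₁ t ^ (2:ℝ)) ^ ((1:ℝ)/4) := by
    rw [normL4L2]
    congr 1
    refine lintegral_congr fun t => ?_
    rw [← ENNReal.rpow_mul]
    norm_num
    rfl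
  have hnorm₂ : normL4L2 W₂ = (∫⁻ t : ℝ, g₂ t ^ (2:ℝ)) ^ ((1:ℝ)/4) := by
    rw [normL4L2]
    congr 1
    refine lintegral_congr fun t => ?_
    rw [← ENNReal.rpow_mul]
    norm_num
    rfl
  -- put everything together
  set N₁ : ℝ≥0∞ := ∫⁻ t : ℝ, g₁ t ^ (2:ℝ) with hN₁
  set N₂ : ℝ≥0∞ := ∫⁻ t : ℝ, g₂ t ^ (2:ℝ) with hN₂
  have hQ : (∫⁻ t : ℝ, ∫⁻ x : ℝ, ∫⁻ t' : ℝ, ∫⁻ x' : ℝ,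
        (‖W₁ (t, x)‖₊ : ℝ≥0∞) ^ 2 *
        ENNReal.ofReal (ψ ((t - t') / 2 ^ l)) ^ 2 *
        (‖K (t - t', x - x')‖₊ : ℝ≥0∞) ^ 2 *
        (‖W₂ (t', x')‖₊ : ℝ≥0∞) ^ 2)
      ≤ A * (ENNReal.ofReal (2 * R) * (N₁ ^ ((1:ℝ)/2) * N₂ ^ ((1:ℝ)/2))) := by
    refine le_trans step1 ?_
    rw [step2, step3]
    refine mul_le_mul' le_rfl (le_trans step4 ?_)
    rw [husq, hvsq,
      ENNReal.mul_rpow_of_nonneg _ _ (by norm_num : (0:ℝ) ≤ 1/2),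
      ENNReal.mul_rpow_of_nonneg _ _ (by norm_num : (0:ℝ) ≤ 1/2)]
    have h2R : ENNReal.ofReal (2 * R) ^ ((1:ℝ)/2) * ENNReal.ofReal (2 * R) ^ ((1:ℝ)/2)
        = ENNReal.ofReal (2 * R) := by
      rw [← ENNReal.rpow_add _ _ ((ENNReal.ofReal_pos.mpr (by positivity)).ne') ENNReal.ofReal_ne_top]
      norm_num
    calc ENNReal.ofReal (2 * R) ^ ((1:ℝ)/2) * N₁ ^ ((1:ℝ)/2) *
          (ENNReal.ofReal (2 * R) ^ ((1:ℝ)/2) * N₂ ^ ((1:ℝ)/2))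
        = (ENNReal.ofReal (2 * R) ^ ((1:ℝ)/2) * ENNReal.ofReal (2 * R) ^ ((1:ℝ)/2)) *
          (N₁ ^ ((1:ℝ)/2) * N₂ ^ ((1:ℝ)/2)) := by ring
      _ = ENNReal.ofReal (2 * R) * (N₁ ^ ((1:ℝ)/2) * N₂ ^ ((1:ℝ)/2)) := by rw [h2R]
      _ ≤ ENNReal.ofReal (2 * R) * (N₁ ^ ((1:ℝ)/2) * N₂ ^ ((1:ℝ)/2)) := le_rfl
  -- apply rpow (1/2)
  have hfinal := ENNReal.rpow_le_rpow hQ (by norm_num : (0:ℝ) ≤ 1/2)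
  refine le_trans hfinal ?_
  have hconst : A * ENNReal.ofReal (2 * R) = ENNReal.ofReal (8 * M ^ 2 * C₀ ^ 2) := by
    rw [hAdef, ← ENNReal.ofReal_mul (by positivity)]
    congr 1
    rw [hRdef]
    have : (2:ℝ) ^ (l + 1) = 2 ^ l * 2 := by ring
    field_simp
    ring
  rw [hnorm₁, hnorm₂, hN₁, hN₂]
  rw [← mul_assoc A, hconst]
  rw [ENNReal.mul_rpow_of_nonneg _ _ (by norm_num : (0:ℝ) ≤ 1/2),
    ENNReal.mul_rpow_of_nonneg _ _ (by norm_num : (0:ℝ) ≤ 1/2),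
    ← ENNReal.rpow_mul, ← ENNReal.rpow_mul]
  norm_num
  have hcoe : ((((8:ℝ) * M ^ 2 * C₀ ^ 2).toNNReal ^ ((1:ℝ)/2) : ℝ≥0) : ℝ≥0∞)
      = ENNReal.ofReal (8 * M ^ 2 * C₀ ^ 2) ^ ((1:ℝ)/2) := by
    rw [ENNReal.coe_rpow_of_nonneg _ (by norm_num : (0:ℝ) ≤ 1/2)]
    rfl
  rw [hcoe]
  norm_num [mul_assoc]
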